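/- Let M be a compact smooth manifold without boundary, f : M → M a C¹ diffeomorphism, and p a hyperbolic fixed point of f. Let y ∈ W^u(p) = {z ∈ M : d(f^{−n}(z), p) → 0 as n → ∞} and y' ∈ W^s(p) = {z ∈ M : d(f^n(z), p) → 0 as n → ∞}. Then for all neighborhoods V_y of y and V_{y'} of y' there exists an integer l such that for every n ≥ l there is a point z ∈ V_{y'} with f^n(z) ∈ V_y. -/

import Mathlib

open Manifold Filter Topology Function
open scoped TensorProduct

noncomputable section

/-- The model space `ℝ^d`. -/
abbrev Euc (d : ℕ) := EuclideanSpace ℝ (Fin d)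

variable (d : ℕ) {M : Type*} [MetricSpace M] [CompactSpace M]
  [ChartedSpace (Euc d) M] [IsManifold (𝓡 d) ((⊤ : ℕ∞) : WithTop ℕ∞) M]

/-- The derivative of `f` at `x`, viewed as a linear endomorphism of the model space `ℝ^d`
(the tangent spaces are identified with `ℝ^d`). -/
def Dop (f : M → M) (x : M) : Euc d →L[ℝ] Euc d := mfderiv (𝓡 d) (𝓡 d) f x

/-- The operator norm `‖A|V‖` of the restriction of `A` to the subspace `V`. -/
def normOn (A : Euc d →L[ℝ] Euc d) (V : Submodule ℝ (Euc d)) : ℝ := ‖A.comp V.subtypeL‖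

/-- A `C¹` diffeomorphism of `M`. -/
structure C1Diffeo (d : ℕ) (M : Type*) [MetricSpace M]
    [ChartedSpace (Euc d) M] where
  toFun : M → M
  invFun : M → M
  left_inv : Function.LeftInverse invFun toFun
  right_inv : Function.RightInverse invFun toFun
  contMDiff_toFun : ContMDiff (𝓡 d) (𝓡 d) 1 toFun
  contMDiff_invFun : ContMDiff (𝓡 d) (𝓡 d) 1 invFun

instance : CoeFun (C1Diffeo d M) (fun _ => M → M) := ⟨C1Diffeo.toFun⟩

/-- The `C¹` distance on `Diff¹(M)`. -/
def c1Dist (f g : C1Diffeo d M) : ℝ :=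
  (⨆ x : M, dist (f.toFun x) (g.toFun x)) + (⨆ x : M, ‖Dop d f.toFun x - Dop d g.toFun x‖)
  + (⨆ x : M, dist (f.invFun x) (g.invFun x)) + (⨆ x : M, ‖Dop d f.invFun x - Dop d g.invFun x‖)

def c1Ball (f : C1Diffeo d M) (ε : ℝ) : Set (C1Diffeo d M) := {g | c1Dist d f g < ε}

/-- `U` is a neighborhood of `f` in the `C¹` topology. -/
def C1Nhd (f : C1Diffeo d M) (U : Set (C1Diffeo d M)) : Prop :=
  f ∈ U ∧ ∃ ε > 0, c1Ball d f ε ⊆ U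

def C1Open (U : Set (C1Diffeo d M)) : Prop := ∀ f ∈ U, ∃ ε > 0, c1Ball d f ε ⊆ U

def C1Dense (U : Set (C1Diffeo d M)) : Prop :=
  ∀ f : C1Diffeo d M, ∀ ε > 0, (c1Ball d f ε ∩ U).Nonempty

/-- A residual subset of `Diff¹(M)`: one containing a countable intersection of dense
open subsets. -/
def C1Residual (R : Set (C1Diffeo d M)) : Prop :=
  ∃ s : ℕ → Set (C1Diffeo d M), (∀ n, C1Open d (s n) ∧ C1Dense d (s n)) ∧ (⋂ n, s n) ⊆ R

/-- The (forward) orbit of a point. For a periodic point this is the full orbit. -/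
def orbitOf (f : M → M) (p : M) : Set M := {y | ∃ n : ℕ, f^[n] p = y}

/-- The stable space `E^s(a) = {v : ‖Df^n_a v‖ → 0}`. -/
def stableSubmodule (f : M → M) (a : M) : Submodule ℝ (Euc d) where
  carrier := {v | Tendsto (fun n : ℕ => ‖Dop d (f^[n]) a v‖) atTop (𝓝 0)}
  zero_mem' := by
    simp
  add_mem' := by
    intro v w hv hw
    have h := hv.add hw
    rw [add_zero] at h
    refine squeeze_zero (fun n => norm_nonneg _) (fun n => ?_) h
    simpa [map_add] using norm_add_le (Dop d (f^[n]) a v) (Dop d (f^[n]) a w)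
  smul_mem' := by
    intro c v hv
    have h : Tendsto (fun n : ℕ => ‖c‖ * ‖Dop d (f^[n]) a v‖) atTop (𝓝 0) := by
      have := (hv : Tendsto (fun n : ℕ => ‖Dop d (f^[n]) a v‖) atTop (𝓝 0)).const_mul ‖c‖
      simpa using this
    show Tendsto _ atTop (𝓝 0)
    refine h.congr fun n => ?_
    rw [map_smul, norm_smul]

/-- A hyperbolic splitting over an invariant set `Λ`, for the diffeomorphism `f`. -/
structure HypSplitting (f : C1Diffeo d M) (Λ : Set M) where
  Es : M → Submodule ℝ (Euc d)
  Eu : M → Submodule ℝ (Euc d)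
  C : ℝ
  lam : ℝ
  C_pos : 0 < C
  lam_mem : lam ∈ Set.Ioo (0:ℝ) 1
  inf_eq_bot : ∀ x ∈ Λ, Es x ⊓ Eu x = ⊥
  sup_eq_top : ∀ x ∈ Λ, Es x ⊔ Eu x = ⊤
  invariant_Es : ∀ x ∈ Λ, (Es x).map (Dop d f.toFun x).toLinearMap = Es (f.toFun x)
  invariant_Eu : ∀ x ∈ Λ, (Eu x).map (Dop d f.toFun x).toLinearMap = Eu (f.toFun x)
  contracting : ∀ x ∈ Λ, ∀ n : ℕ, normOn d (Dop d (f.toFun^[n]) x) (Es x) ≤ C * lam ^ n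
  expanding : ∀ x ∈ Λ, ∀ n : ℕ, normOn d (Dop d (f.invFun^[n]) x) (Eu x) ≤ C * lam ^ n

/-- A compact invariant set is hyperbolic if it carries a hyperbolic splitting. -/
def IsHyperbolicSet (f : C1Diffeo d M) (Λ : Set M) : Prop := Nonempty (HypSplitting d f Λ)

/-- `p` is a hyperbolic periodic point of `f`. -/
def IsHypPeriodicPt (f : C1Diffeo d M) (p : M) : Prop :=
  (∃ τ : ℕ, 0 < τ ∧ f.toFun^[τ] p = p) ∧ IsHyperbolicSet d f (orbitOf f.toFun p)

/-- The index of a hyperbolic periodic point: the dimension of its stable space. -/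
def ind (f : C1Diffeo d M) (p : M) : ℕ := Module.finrank ℝ (stableSubmodule d f.toFun p)

/-- The stable set of the orbit of `p` for the diffeomorphism `f`. -/
def Wstable (f : C1Diffeo d M) (p : M) : Set M :=
  {z | ∃ p' ∈ orbitOf f.toFun p,
    Tendsto (fun n : ℕ => dist (f.toFun^[n] z) (f.toFun^[n] p')) atTop (𝓝 0)}

/-- The unstable set of the orbit of `p` for the diffeomorphism `f`. -/
def Wunstable (f : C1Diffeo d M) (p : M) : Set M :=
  {z | ∃ p' ∈ orbitOf f.toFun p,
    Tendsto (fun n : ℕ => dist (f.invFun^[n] z) (f.invFun^[n] p')) atTop (𝓝 0)}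

/-- There is a transverse intersection point of `W^u(orb p)` and `W^s(orb q)`. -/
def TransverseInt (f : C1Diffeo d M) (p q : M) : Prop :=
  ∃ a, a ∈ Wunstable d f p ∧ a ∈ Wstable d f q ∧
    stableSubmodule d f.invFun a ⊔ stableSubmodule d f.toFun a = ⊤

/-- Two hyperbolic periodic points are homoclinically related. -/
def HomRelated (f : C1Diffeo d M) (p q : M) : Prop :=
  TransverseInt d f p q ∧ TransverseInt d f q p

/-- The homoclinic class of `p`: the closure of the set of hyperbolic periodic points
homoclinically related to `p`. -/
def homoclinicClass (f : C1Diffeo d M) (p : M) : Set M :=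
  closure {q | IsHypPeriodicPt d f q ∧ HomRelated d f p q}

/-- An `(m, λ)`-dominated splitting `E ⊕ F` over the invariant set `Λ`. -/
structure IsDomSplitting (f : C1Diffeo d M) (Λ : Set M)
    (E F : M → Submodule ℝ (Euc d)) (m : ℕ) (lam : ℝ) : Prop where
  m_pos : 0 < m
  lam_mem : lam ∈ Set.Ioo (0:ℝ) 1
  inf_eq_bot : ∀ x ∈ Λ, E x ⊓ F x = ⊥
  sup_eq_top : ∀ x ∈ Λ, E x ⊔ F x = ⊤
  invariant_E : ∀ x ∈ Λ, (E x).map (Dop d f.toFun x).toLinearMap = E (f.toFun x)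
  invariant_F : ∀ x ∈ Λ, (F x).map (Dop d f.toFun x).toLinearMap = F (f.toFun x)
  const_dim : ∀ x ∈ Λ, ∀ y ∈ Λ, Module.finrank ℝ (E x) = Module.finrank ℝ (E y)
  dominated : ∀ x ∈ Λ,
    normOn d (Dop d (f.toFun^[m]) x) (E x)
      * normOn d (Dop d (f.invFun^[m]) (f.toFun^[m] x)) (F (f.toFun^[m] x)) < lam

/-- The bundle `E` is (uniformly) contracted over `Λ`. -/
def IsContracted (f : C1Diffeo d M) (Λ : Set M) (E : M → Submodule ℝ (Euc d)) : Prop :=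
  ∃ C > 0, ∃ lam ∈ Set.Ioo (0:ℝ) 1, ∀ x ∈ Λ, ∀ n : ℕ,
    normOn d (Dop d (f.toFun^[n]) x) (E x) ≤ C * lam ^ n

/-- `x` is a `λ`-`E`-Pliss point for the map `g`. -/
def IsPlissPt (g : M → M) (E : M → Submodule ℝ (Euc d)) (lam : ℝ) (x : M) : Prop :=
  ∀ n : ℕ, 1 ≤ n →
    ∏ i ∈ Finset.range n, normOn d (Dop d g (g^[i] x)) (E (g^[i] x)) ≤ lam ^ n

/-- A set `K` is a `λ`-`E`-weak set: it contains no `λ`-`E`-Pliss point. -/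
def IsWeakSet (g : M → M) (E : M → Submodule ℝ (Euc d)) (lam : ℝ) (K : Set M) : Prop :=
  ∀ x ∈ K, ¬ IsPlissPt d g E lam x

/-- `x` is a `λ`-bi-Pliss point: a `λ`-`E`-Pliss point for `f` and a `λ`-`F`-Pliss point
for `f⁻¹`. -/
def IsBiPlissPt (f : C1Diffeo d M) (E F : M → Submodule ℝ (Euc d)) (lam : ℝ) (x : M) : Prop :=
  IsPlissPt d f.toFun E lam x ∧ IsPlissPt d f.invFun F lam x

/-- The ω-limit set of `y` under the map `g`: the set of accumulation points of the
forward orbit of `y`. -/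
def omegaLim (g : M → M) (y : M) : Set M :=
  {z | ∃ φ : ℕ → ℕ, StrictMono φ ∧ Tendsto (fun n => g^[φ n] y) atTop (𝓝 z)}

/-- The α-limit set of `y` under the diffeomorphism `f`: the set of accumulation points of
the backward orbit of `y`. -/
def alphaLim (f : C1Diffeo d M) (y : M) : Set M := omegaLim f.invFun y

/-- `b` is chain attainable from `a` for the map `g`: for every `ε > 0` there is an
`ε`-pseudo-orbit from `a` to `b`. -/
def ChainAttain (g : M → M) (a b : M) : Prop :=
  ∀ ε > 0, ∃ (n : ℕ) (x : ℕ → M), 1 ≤ n ∧ x 0 = a ∧ x n = b ∧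
    ∀ i < n, dist (g (x i)) (x (i + 1)) < ε

/-- The chain recurrence class of `p` for the map `g`. -/
def chainClass (g : M → M) (p : M) : Set M :=
  {z | ChainAttain g z p ∧ ChainAttain g p z}

/-- The set of Lyapunov exponents of a periodic orbit of period `τ`:
the numbers `(1/τ) log |μ|` over the complex eigenvalues `μ` of the complexification of
`D(f^τ)_p`. -/
def lyapunovExps (f : M → M) (p : M) (τ : ℕ) : Set ℝ :=
  {χ | ∃ μ : ℂ,
    Module.End.HasEigenvalue (LinearMap.baseChange ℂ (Dop d (f^[τ]) p).toLinearMap) μ ∧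
    χ = Real.log ‖μ‖ / τ}

/-- The spectral radius of the restriction of `A` to an `A`-invariant subspace `V`:
the supremum of the moduli of the complex eigenvalues of the complexification of the
restriction `A|V`. -/
def spectralRadiusOn (A : Euc d →L[ℝ] Euc d) (V : Submodule ℝ (Euc d))
    (h : ∀ v ∈ V, A v ∈ V) : ℝ :=
  sSup {r | ∃ μ : ℂ,
    Module.End.HasEigenvalue (LinearMap.baseChange ℂ (A.toLinearMap.restrict h)) μ ∧
    r = ‖μ‖}

end

/-!
In the chart at `p`, `f` becomes a `C¹` map `G` fixing `x₀` whose derivative `A` has an exponential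
dichotomy. Follow the forward orbit of `y'` until it is close to `x₀`, then jump to the backward
orbit of `y`: for every large `m` this is a pseudo-orbit of length `m` with a single small jump.
It is shadowed by a true orbit, because the linearised orbit equation
`v (i + 1) - A (v i) = e i` on `{0, …, m}` has a right inverse (the discrete Green operator)
whose norm is bounded independently of `m`; the surjectivity half of the inverse function theorem
(`ApproximatesLinearOn.surjOn_closedBall_of_nonlinearRightInverse`) then solves the nonlinear
equation `z (i + 1) = G (z i)` near the pseudo-orbit.
-/

open Metric NNReal

lemma norm_sum_range_le_of_le_geometric {E : Type*} [SeminormedAddCommGroup E] {v : ℕ → E}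
    {D lam : ℝ} (hlam₀ : 0 ≤ lam) (hlam₁ : lam < 1) (hv : ∀ k, ‖v k‖ ≤ D * lam ^ k) (N : ℕ) :
    ‖∑ k ∈ Finset.range N, v k‖ ≤ D / (1 - lam) := by
  have hD : 0 ≤ D := by simpa using (norm_nonneg _).trans (hv 0)
  calc ‖∑ k ∈ Finset.range N, v k‖ ≤ ∑ k ∈ Finset.range N, D * lam ^ k :=
        norm_sum_le_of_le _ fun k _ => hv k
    _ = D * ∑ k ∈ Finset.Ico 0 N, lam ^ k := by rw [← Finset.mul_sum, Finset.range_eq_Ico]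
    _ ≤ D * (lam ^ 0 / (1 - lam)) := by gcongr; exact geom_sum_Ico_le_of_lt_one hlam₀ hlam₁
    _ = D / (1 - lam) := by ring

lemma norm_extend_val_le {E : Type*} [SeminormedAddCommGroup E] {n : ℕ} (e : Fin n → E)
    (j : ℕ) : ‖extend Fin.val e 0 j‖ ≤ ‖e‖ := by
  by_cases hj : j < n
  · rw [show j = (⟨j, hj⟩ : Fin n).val from rfl, Fin.val_injective.extend_apply]
    exact norm_le_pi_norm e _
  · rw [extend_apply' _ _ _ fun ⟨i, hi⟩ => hj (hi ▸ i.isLt), Pi.zero_apply, norm_zero]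
    exact norm_nonneg _

lemma extend_val_apply_of_lt {X : Type*} [Zero X] {n j : ℕ} (e : Fin n → X) (hj : j < n) :
    extend Fin.val e 0 j = e ⟨j, hj⟩ :=
  Fin.val_injective.extend_apply e 0 ⟨j, hj⟩

/-- The sequence `a 0, …, a J, b (m - J - 1), …, b 0`. -/
def splice {X : Type*} (a b : ℕ → X) (J m i : ℕ) : X := if i ≤ J then a i else b (m - i)

lemma splice_mem {X : Type*} {V : Set X} {a b : ℕ → X} (ha : ∀ i, a i ∈ V) (hb : ∀ j, b j ∈ V)
    (J m i : ℕ) : splice a b J m i ∈ V := by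
  unfold splice
  split_ifs
  exacts [ha i, hb (m - i)]

lemma dist_splice_succ_le {X : Type*} [PseudoMetricSpace X] {G : X → X} {a b : ℕ → X}
    (ha : ∀ i, G (a i) = a (i + 1)) (hb : ∀ j, G (b (j + 1)) = b j) {J m i : ℕ} (hi : i < m) :
    dist (splice a b J m (i + 1)) (G (splice a b J m i)) ≤ dist (b (m - (J + 1))) (a (J + 1)) := by
  unfold splice
  rcases lt_trichotomy i J with hiJ | rfl | hiJ
  · rw [if_pos (by omega), if_pos hiJ.le, ha, dist_self]
    exact dist_nonneg
  · rw [if_neg (by omega), if_pos le_rfl, ha]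
  · rw [if_neg (by omega), if_neg (by omega), show m - i = m - (i + 1) + 1 by omega, hb, dist_self]
    exact dist_nonneg

lemma PartialEquiv.iterate_symm_apply_of_orbit {α β : Type*} (φ : PartialEquiv α β) {f : α → α}
    {z : ℕ → β} {m : ℕ} (hz : ∀ i < m, z (i + 1) = φ (f (φ.symm (z i))))
    (hsrc : ∀ i < m, f (φ.symm (z i)) ∈ φ.source) :
    ∀ i ≤ m, f^[i] (φ.symm (z 0)) = φ.symm (z i)
  | 0, _ => rfl
  | i + 1, hi => by
    rw [iterate_succ_apply', φ.iterate_symm_apply_of_orbit hz hsrc i (by omega), hz i hi,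
      φ.left_inv (hsrc i hi)]

section ExpDichotomy

variable {E : Type*} [NormedAddCommGroup E] [NormedSpace ℝ E]

/-- A discrete exponential dichotomy of `A`. The bounds are in terms of `‖x‖` rather than
`‖Ps x‖`, so `C` absorbs the norms of the projections. -/
structure IsExpDichotomy (A B : E →L[ℝ] E) (Ps Pu : E →ₗ[ℝ] E) (C lam : ℝ) : Prop where
  apply_inv : ∀ x, A (B x) = x
  proj_add : ∀ x, Ps x + Pu x = x
  C_pos : 0 < C
  lam_nonneg : 0 ≤ lam
  lam_lt_one : lam < 1
  norm_pow_stable_le : ∀ k x, ‖(A ^ k) (Ps x)‖ ≤ C * lam ^ k * ‖x‖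
  norm_pow_unstable_le : ∀ k x, ‖(B ^ k) (Pu x)‖ ≤ C * lam ^ k * ‖x‖

lemma norm_apply_le_of_norm_comp_subtypeL_le {T : E →L[ℝ] E} {V : Submodule ℝ E} {c : ℝ}
    (hT : ‖T.comp V.subtypeL‖ ≤ c) {P : E →ₗ[ℝ] E} (hPV : ∀ x, P x ∈ V) {K : ℝ}
    (hPK : ∀ x, ‖P x‖ ≤ K * ‖x‖) (x : E) : ‖T (P x)‖ ≤ c * K * ‖x‖ :=
  calc ‖T (P x)‖ ≤ c * ‖P x‖ := (T.comp V.subtypeL).le_of_opNorm_le hT ⟨P x, hPV x⟩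
    _ ≤ c * (K * ‖x‖) :=
      mul_le_mul_of_nonneg_left (hPK x) ((norm_nonneg (T.comp V.subtypeL)).trans hT)
    _ = c * K * ‖x‖ := (mul_assoc _ _ _).symm

lemma exists_isExpDichotomy_of_isCompl [FiniteDimensional ℝ E] {A B : E →L[ℝ] E}
    {Es Eu : Submodule ℝ E} (hAB : ∀ x, A (B x) = x) (hEsu : IsCompl Es Eu) {C lam : ℝ}
    (hC : 0 < C) (hlam : lam ∈ Set.Ioo 0 1)
    (hAs : ∀ n : ℕ, ‖(A ^ n).comp Es.subtypeL‖ ≤ C * lam ^ n)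
    (hBu : ∀ n : ℕ, ‖(B ^ n).comp Eu.subtypeL‖ ≤ C * lam ^ n) :
    ∃ C', IsExpDichotomy A B (Es.projection Eu hEsu) (Eu.projection Es hEsu.symm) C' lam := by
  obtain ⟨Ks, hKs, hPs⟩ := (LinearMap.toContinuousLinearMap (Es.projection Eu hEsu)).bound
  obtain ⟨Ku, hKu, hPu⟩ := (LinearMap.toContinuousLinearMap (Eu.projection Es hEsu.symm)).bound
  have hbound : ∀ {P : E →ₗ[ℝ] E} {K : ℝ}, (∀ x, ‖LinearMap.toContinuousLinearMap P x‖ ≤ K * ‖x‖) →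
      K ≤ Ks + Ku → ∀ x, ‖P x‖ ≤ (Ks + Ku) * ‖x‖ := fun hP hK x =>
    (hP x).trans (mul_le_mul_of_nonneg_right hK (norm_nonneg x))
  refine ⟨C * (Ks + Ku), hAB, Submodule.projection_add_projection_eq_self hEsu,
    by positivity, hlam.1.le, hlam.2, fun k x => ?_, fun k x => ?_⟩
  · exact (norm_apply_le_of_norm_comp_subtypeL_le (hAs k) (Submodule.projection_apply_mem hEsu)
      (hbound hPs (by linarith)) x).trans_eq (by ring)
  · exact (norm_apply_le_of_norm_comp_subtypeL_le (hBu k)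
      (Submodule.projection_apply_mem hEsu.symm) (hbound hPu (by linarith)) x).trans_eq (by ring)

/-- Solves `v (i + 1) = A (v i) + e i` on `{0, …, n}`: the stable part of `e` is pushed forward
by `A`, the unstable part pulled back by `B`. -/
noncomputable def greenSeq (A B : E →L[ℝ] E) (Ps Pu : E →ₗ[ℝ] E) (n : ℕ) (e : ℕ → E) (i : ℕ) :
    E :=
  ∑ k ∈ Finset.range i, (A ^ k) (Ps (e (i - 1 - k)))
    - ∑ k ∈ Finset.range (n - i), (B ^ (k + 1)) (Pu (e (i + k)))

def stepDefect (A : E →L[ℝ] E) (n : ℕ) : (Fin (n + 1) → E) →L[ℝ] (Fin n → E) :=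
  ContinuousLinearMap.pi fun i =>
    ContinuousLinearMap.proj (φ := fun _ => E) i.succ
      - A.comp (ContinuousLinearMap.proj (φ := fun _ => E) i.castSucc)

variable {A B : E →L[ℝ] E} {Ps Pu : E →ₗ[ℝ] E} {C lam : ℝ}

@[simp]
lemma stepDefect_apply (n : ℕ) (v : Fin (n + 1) → E) (i : Fin n) :
    stepDefect A n v i = v i.succ - A (v i.castSucc) :=
  rfl

lemma ApproximatesLinearOn.stepDefect {G : E → E} {U : Set E} {ε : ℝ≥0}
    (hG : ApproximatesLinearOn G A U ε) (n : ℕ) :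
    ApproximatesLinearOn (fun z : Fin (n + 1) → E => fun i : Fin n => z i.succ - G (z i.castSucc))
      (_root_.stepDefect A n) (Set.univ.pi fun _ => U) ε := by
  intro z hz z' hz'
  refine (pi_norm_le_iff_of_nonneg (by positivity)).2 fun i => ?_
  calc ‖(z i.succ - G (z i.castSucc)) - (z' i.succ - G (z' i.castSucc))
        - (_root_.stepDefect A n (z - z')) i‖
      = ‖G (z i.castSucc) - G (z' i.castSucc) - A (z i.castSucc - z' i.castSucc)‖ := by
        rw [← norm_neg, stepDefect_apply]; congr 1; simp only [Pi.sub_apply, map_sub]; abel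
    _ ≤ ε * ‖z - z'‖ := by
        grw [hG _ (hz i.castSucc trivial) _ (hz' i.castSucc trivial), ← Pi.sub_apply,
          norm_le_pi_norm (z - z')]

namespace IsExpDichotomy

lemma greenSeq_succ (h : IsExpDichotomy A B Ps Pu C lam) {n i : ℕ} (hi : i < n) (e : ℕ → E) :
    greenSeq A B Ps Pu n e (i + 1) = A (greenSeq A B Ps Pu n e i) + e i := by
  have hstable : ∑ k ∈ Finset.range (i + 1), (A ^ k) (Ps (e (i + 1 - 1 - k)))
      = A (∑ k ∈ Finset.range i, (A ^ k) (Ps (e (i - 1 - k)))) + Ps (e i) := by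
    rw [Finset.sum_range_succ', map_sum]
    congr 1
    refine Finset.sum_congr rfl fun k _ => ?_
    rw [pow_succ', mul_apply_eq_comp]
    congr 4
    omega
  have hunstable : ∑ k ∈ Finset.range (n - i), (B ^ (k + 1)) (Pu (e (i + k)))
      = B (Pu (e i)) + ∑ k ∈ Finset.range (n - (i + 1)), (B ^ (k + 2)) (Pu (e (i + 1 + k))) := by
    rw [show n - i = n - (i + 1) + 1 by omega, Finset.sum_range_succ', add_comm]
    congr 1
    refine Finset.sum_congr rfl fun k _ => ?_
    rw [show i + (k + 1) = i + 1 + k by ring]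
  have hA_unstable : A (∑ k ∈ Finset.range (n - (i + 1)), (B ^ (k + 2)) (Pu (e (i + 1 + k))))
      = ∑ k ∈ Finset.range (n - (i + 1)), (B ^ (k + 1)) (Pu (e (i + 1 + k))) := by
    rw [map_sum]
    refine Finset.sum_congr rfl fun k _ => ?_
    rw [pow_succ' B (k + 1), mul_apply_eq_comp, h.apply_inv]
  unfold greenSeq
  rw [hstable, hunstable, map_sub, map_add, h.apply_inv, hA_unstable]
  linear_combination (norm := module) h.proj_add (e i)

lemma norm_greenSeq_le (h : IsExpDichotomy A B Ps Pu C lam) {e : ℕ → E} {c : ℝ}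
    (he : ∀ j, ‖e j‖ ≤ c) (n i : ℕ) :
    ‖greenSeq A B Ps Pu n e i‖ ≤ 2 * C / (1 - lam) * c := by
  have hC := h.C_pos
  have hlam := h.lam_nonneg
  have hstable : ‖∑ k ∈ Finset.range i, (A ^ k) (Ps (e (i - 1 - k)))‖ ≤ C * c / (1 - lam) :=
    norm_sum_range_le_of_le_geometric hlam h.lam_lt_one (fun k => calc
      _ ≤ C * lam ^ k * ‖e (i - 1 - k)‖ := h.norm_pow_stable_le k _
      _ ≤ C * c * lam ^ k := by rw [mul_right_comm]; gcongr; exact he _) i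
  have hunstable :
      ‖∑ k ∈ Finset.range (n - i), (B ^ (k + 1)) (Pu (e (i + k)))‖ ≤ C * c / (1 - lam) :=
    norm_sum_range_le_of_le_geometric hlam h.lam_lt_one (fun k => calc
      _ ≤ C * lam ^ (k + 1) * ‖e (i + k)‖ := h.norm_pow_unstable_le (k + 1) _
      _ ≤ C * lam ^ k * c := by
        gcongr C * ?_ * ?_
        exacts [pow_le_pow_of_le_one hlam h.lam_lt_one.le k.le_succ, he _]
      _ = C * c * lam ^ k := by ring) (n - i)
  calc ‖greenSeq A B Ps Pu n e i‖ ≤ C * c / (1 - lam) + C * c / (1 - lam) :=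
        (norm_sub_le _ _).trans (add_le_add hstable hunstable)
    _ = 2 * C / (1 - lam) * c := by ring

/-- The bound `2 C / (1 - lam)` does not depend on `n`: this is what lets pseudo-orbits of any
length be shadowed. -/
noncomputable def greenRightInverse (h : IsExpDichotomy A B Ps Pu C lam) (n : ℕ) :
    (stepDefect A n).NonlinearRightInverse where
  toFun e i := greenSeq A B Ps Pu n (extend Fin.val e 0) i
  nnnorm := ⟨2 * C / (1 - lam), div_nonneg (by linarith [h.C_pos]) (by linarith [h.lam_lt_one])⟩
  bound' e := (pi_norm_le_iff_of_nonneg (mul_nonneg (NNReal.coe_nonneg _) (norm_nonneg e))).2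
    fun i => h.norm_greenSeq_le (norm_extend_val_le e) n i
  right_inv' e := funext fun i => by
    simp only [stepDefect_apply, Fin.val_succ, Fin.val_castSucc, h.greenSeq_succ i.isLt,
      add_sub_cancel_left]
    exact extend_val_apply_of_lt e i.isLt

variable [CompleteSpace E]

theorem exists_orbit_near_pseudoOrbit (h : IsExpDichotomy A B Ps Pu C lam) {G : E → E}
    {U : Set E} {ε : ℝ≥0} (hG : ApproximatesLinearOn G A U ε)
    (hε : ε ≤ (1 - lam) / (2 * C)) {ρ : ℝ} (hρ : 0 ≤ ρ) {n : ℕ} {w : ℕ → E}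
    (hwU : ∀ i ≤ n, closedBall (w i) ρ ⊆ U)
    (hw : ∀ i < n, ‖w (i + 1) - G (w i)‖ ≤ ((1 - lam) / (2 * C) - ε) * ρ) :
    ∃ z : ℕ → E, (∀ i < n, z (i + 1) = G (z i)) ∧ ∀ i ≤ n, ‖z i - w i‖ ≤ ρ := by
  set w' : Fin (n + 1) → E := fun i => w i
  have hball : closedBall w' ρ ⊆ Set.univ.pi fun _ => U := fun z hz i _ =>
    hwU i (Nat.lt_succ_iff.mp i.isLt) <|
      mem_closedBall_iff_norm.2 ((norm_le_pi_norm (z - w') i).trans (mem_closedBall_iff_norm.1 hz))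
  have hinv : ((h.greenRightInverse n).nnnorm : ℝ)⁻¹ = (1 - lam) / (2 * C) := inv_div _ _
  have hzero : (0 : Fin n → E) ∈ closedBall (fun i : Fin n => w' i.succ - G (w' i.castSucc))
      ((((h.greenRightInverse n).nnnorm : ℝ)⁻¹ - ε) * ρ) := by
    rw [mem_closedBall_iff_norm, zero_sub, norm_neg, hinv]
    exact (pi_norm_le_iff_of_nonneg (mul_nonneg (sub_nonneg.2 hε) hρ)).2 fun i => hw i i.isLt
  obtain ⟨z, hz, hzorbit⟩ :=
    (hG.stepDefect n).surjOn_closedBall_of_nonlinearRightInverse (h.greenRightInverse n) hρ hball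
      hzero
  refine ⟨extend Fin.val z 0, fun i hi => ?_, fun i hi => ?_⟩
  · have := congr_fun hzorbit ⟨i, hi⟩
    rw [Pi.zero_apply, sub_eq_zero] at this
    rw [extend_val_apply_of_lt z (Nat.succ_lt_succ hi), extend_val_apply_of_lt z (by omega)]
    exact this
  · rw [extend_val_apply_of_lt z (Nat.lt_succ_of_le hi)]
    exact (norm_le_pi_norm (z - w') _).trans (mem_closedBall_iff_norm.1 hz)

theorem exists_orbit_connecting (h : IsExpDichotomy A B Ps Pu C lam) {G : E → E} {x₀ : E}
    (hG : HasStrictFDerivAt G A x₀) {U : Set E} (hU : U ∈ 𝓝 x₀) :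
    ∃ V ∈ 𝓝 x₀, ∀ a b : ℕ → E, (∀ i, a i ∈ V) → (∀ j, b j ∈ V) →
      (∀ i, G (a i) = a (i + 1)) → (∀ j, G (b (j + 1)) = b j) →
      Tendsto a atTop (𝓝 x₀) → Tendsto b atTop (𝓝 x₀) →
      ∀ Na ∈ 𝓝 (a 0), ∀ Nb ∈ 𝓝 (b 0), ∃ l, ∀ m ≥ l, ∃ z : ℕ → E,
        (∀ i < m, z (i + 1) = G (z i)) ∧ (∀ i ≤ m, z i ∈ U) ∧ z 0 ∈ Na ∧ z m ∈ Nb := by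
  set κ := (1 - lam) / (2 * C)
  have hκ : 0 < κ := div_pos (by linarith [h.lam_lt_one]) (by linarith [h.C_pos])
  obtain ⟨s, hs, hGs⟩ :=
    hG.approximates_deriv_on_nhds (c := ⟨κ / 2, (half_pos hκ).le⟩) (Or.inr (half_pos hκ))
  obtain ⟨r, hr, hrs⟩ := Metric.mem_nhds_iff.1 (inter_mem hs hU)
  refine ⟨ball x₀ (r / 2), ball_mem_nhds x₀ (half_pos hr),
    fun a b haV hbV ha hb ha_lim hb_lim Na hNa Nb hNb => ?_⟩
  obtain ⟨η, hη, hηa, hηb⟩ : ∃ η > 0, ball (a 0) η ⊆ Na ∧ ball (b 0) η ⊆ Nb := by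
    obtain ⟨η₁, h₁, hη₁⟩ := Metric.mem_nhds_iff.1 hNa
    obtain ⟨η₂, h₂, hη₂⟩ := Metric.mem_nhds_iff.1 hNb
    exact ⟨min η₁ η₂, lt_min h₁ h₂, (ball_subset_ball (min_le_left _ _)).trans hη₁,
      (ball_subset_ball (min_le_right _ _)).trans hη₂⟩
  set ρ := min (r / 2) (η / 2)
  have hρ : 0 < ρ := lt_min (half_pos hr) (half_pos hη)
  have hδ : 0 < (κ - κ / 2) * ρ := mul_pos (by linarith) hρ
  obtain ⟨J, hJ⟩ := eventually_atTop.1 ((ha_lim.eventually (ball_mem_nhds x₀ (half_pos hδ))).and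
    (hb_lim.eventually (ball_mem_nhds x₀ (half_pos hδ))))
  refine ⟨2 * J + 1, fun m hm => ?_⟩
  have hwU : ∀ i ≤ m, closedBall (splice a b J m i) ρ ⊆ ball x₀ r := fun i _ =>
    closedBall_subset_ball' (by
      linarith [min_le_left (r / 2) (η / 2), mem_ball.1 (splice_mem haV hbV J m i)])
  have hw : ∀ i < m, ‖splice a b J m (i + 1) - G (splice a b J m i)‖ ≤ (κ - κ / 2) * ρ :=
    fun i hi => by
      rw [← dist_eq_norm]
      refine (dist_splice_succ_le ha hb hi).trans ((dist_triangle_right _ _ x₀).trans ?_)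
      linarith [mem_ball.1 (hJ (m - (J + 1)) (by omega)).2, mem_ball.1 (hJ (J + 1) (by omega)).1]
  obtain ⟨z, hz, hzw⟩ := h.exists_orbit_near_pseudoOrbit (hGs.mono_set fun x hx => (hrs hx).1)
    (show κ / 2 ≤ κ by linarith) hρ.le hwU hw
  have hρη : ρ < η := (min_le_right _ _).trans_lt (half_lt_self hη)
  refine ⟨z, hz, fun i hi => (hrs (hwU i hi (mem_closedBall_iff_norm.2 (hzw i hi)))).2, ?_, ?_⟩
  · refine hηa (mem_ball_iff_norm.2 ?_)
    simpa [splice] using (hzw 0 (Nat.zero_le m)).trans_lt hρη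
  · refine hηb (mem_ball_iff_norm.2 ?_)
    simpa [splice, show ¬ m ≤ J by omega] using (hzw m le_rfl).trans_lt hρη

end IsExpDichotomy

end ExpDichotomy

section Manifold

variable {E : Type*} [NormedAddCommGroup E] [NormedSpace ℝ E]
  {M : Type*} [TopologicalSpace M] [ChartedSpace E M]

lemma HasMFDerivAt.iterate {f : M → M} {p : M} {f' : E →L[ℝ] E}
    (hf : HasMFDerivAt 𝓘(ℝ, E) 𝓘(ℝ, E) f p f') (hp : f p = p) (n : ℕ) :
    HasMFDerivAt 𝓘(ℝ, E) 𝓘(ℝ, E) f^[n] p (f' ^ n) := by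
  induction n with
  | zero => exact hasMFDerivAt_id p
  | succ n ih =>
    rw [iterate_succ', pow_succ']
    exact (iterate_fixed hp n ▸ hf).comp p ih

lemma mfderiv_apply_mfderiv_of_rightInverse {f g : M → M} {p : M}
    (hf : MDifferentiableAt 𝓘(ℝ, E) 𝓘(ℝ, E) f p) (hg : MDifferentiableAt 𝓘(ℝ, E) 𝓘(ℝ, E) g p)
    (hfg : RightInverse g f) (hgp : g p = p) (v : E) :
    mfderiv 𝓘(ℝ, E) 𝓘(ℝ, E) f p (mfderiv 𝓘(ℝ, E) 𝓘(ℝ, E) g p v) = v := by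
  have hf' : MDifferentiableAt 𝓘(ℝ, E) 𝓘(ℝ, E) f (g p) := by rwa [hgp]
  have hcomp := mfderiv_comp p hf' hg
  rw [hfg.comp_eq_id, mfderiv_id, hgp] at hcomp
  exact (congr_arg (fun T => T v) hcomp).symm

lemma ContMDiffAt.hasStrictFDerivAt_writtenInExtChartAt {f : M → M} {p : M}
    (hf : ContMDiffAt 𝓘(ℝ, E) 𝓘(ℝ, E) 1 f p) :
    HasStrictFDerivAt (writtenInExtChartAt 𝓘(ℝ, E) 𝓘(ℝ, E) p f)
      (mfderiv 𝓘(ℝ, E) 𝓘(ℝ, E) f p) (extChartAt 𝓘(ℝ, E) p p) := by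
  have hcd := (contMDiffAt_iff.1 hf).2
  rw [modelWithCornersSelf_coe, Set.range_id, contDiffWithinAt_univ] at hcd
  rw [(hf.mdifferentiableAt one_ne_zero).mfderiv, modelWithCornersSelf_coe, Set.range_id,
    fderivWithin_univ]
  exact hcd.hasStrictFDerivAt one_ne_zero

variable [CompleteSpace E]

theorem exists_orbit_connecting_near_fixedPt (f : M ≃ₜ M) {p : M}
    (hf : ContMDiffAt 𝓘(ℝ, E) 𝓘(ℝ, E) 1 f p) (hfp : f p = p) {B : E →L[ℝ] E}
    {Ps Pu : E →ₗ[ℝ] E} {C lam : ℝ}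
    (hA : IsExpDichotomy (E := E) (mfderiv 𝓘(ℝ, E) 𝓘(ℝ, E) f p) B Ps Pu C lam) :
    ∃ W ∈ 𝓝 p, ∀ x x' : M, (∀ i, f^[i] x' ∈ W) → (∀ j, f.symm^[j] x ∈ W) →
      Tendsto (fun i => f^[i] x') atTop (𝓝 p) → Tendsto (fun j => f.symm^[j] x) atTop (𝓝 p) →
      ∀ Vx ∈ 𝓝 x, ∀ Vx' ∈ 𝓝 x', ∃ l, ∀ m ≥ l, ∃ z ∈ Vx', f^[m] z ∈ Vx := by
  set φ := extChartAt 𝓘(ℝ, E) p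
  have hG : HasStrictFDerivAt (φ ∘ f ∘ φ.symm) (mfderiv 𝓘(ℝ, E) 𝓘(ℝ, E) f p) (φ p) := by
    simpa only [writtenInExtChartAt, hfp] using hf.hasStrictFDerivAt_writtenInExtChartAt
  have hU : φ.target ∩ φ.symm ⁻¹' (f ⁻¹' φ.source) ∈ 𝓝 (φ p) := by
    refine inter_mem (extChartAt_target_mem_nhds p)
      ((continuousAt_extChartAt_symm p).preimage_mem_nhds ?_)
    rw [extChartAt_to_inv]
    exact hf.continuousAt.preimage_mem_nhds (by rw [hfp]; exact extChartAt_source_mem_nhds p)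
  obtain ⟨V, hV, hconnect⟩ := hA.exists_orbit_connecting hG hU
  refine ⟨φ.source ∩ φ ⁻¹' V, inter_mem (extChartAt_source_mem_nhds p)
    ((continuousAt_extChartAt p).preimage_mem_nhds hV),
    fun x x' hx' hx hx'_lim hx_lim Vx hVx Vx' hVx' => ?_⟩
  have hpull : ∀ y ∈ φ.source, ∀ N ∈ 𝓝 y, φ.symm ⁻¹' N ∈ 𝓝 (φ y) := fun y hy N hN =>
    (continuousAt_extChartAt_symm'' (φ.map_source hy)).preimage_mem_nhds (by rwa [φ.left_inv hy])
  obtain ⟨l, hl⟩ := hconnect (fun i => φ (f^[i] x')) (fun j => φ (f.symm^[j] x))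
    (fun i => (hx' i).2) (fun j => (hx j).2)
    (fun i => by simp only [comp_apply, φ.left_inv (hx' i).1, iterate_succ_apply'])
    (fun j => by
      simp only [comp_apply, φ.left_inv (hx (j + 1)).1]
      rw [iterate_succ_apply', f.apply_symm_apply])
    ((continuousAt_extChartAt p).tendsto.comp hx'_lim)
    ((continuousAt_extChartAt p).tendsto.comp hx_lim)
    _ (hpull x' (hx' 0).1 Vx' hVx') _ (hpull x (hx 0).1 Vx hVx)
  refine ⟨l, fun m hm => ?_⟩
  obtain ⟨z, hz, hzU, hz0, hzm⟩ := hl m hm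
  refine ⟨φ.symm (z 0), hz0, ?_⟩
  rw [φ.iterate_symm_apply_of_orbit hz (fun i hi => (hzU i hi.le).2) m le_rfl]
  exact hzm

theorem exists_iterate_mem_of_tendsto (f : M ≃ₜ M) {p : M}
    (hf : ContMDiffAt 𝓘(ℝ, E) 𝓘(ℝ, E) 1 f p) (hfp : f p = p) {B : E →L[ℝ] E}
    {Ps Pu : E →ₗ[ℝ] E} {C lam : ℝ}
    (hA : IsExpDichotomy (E := E) (mfderiv 𝓘(ℝ, E) 𝓘(ℝ, E) f p) B Ps Pu C lam) {y y' : M}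
    (hy : Tendsto (fun n => f.symm^[n] y) atTop (𝓝 p))
    (hy' : Tendsto (fun n => f^[n] y') atTop (𝓝 p)) :
    ∀ Vy ∈ 𝓝 y, ∀ Vy' ∈ 𝓝 y', ∃ l : ℕ, ∀ n : ℕ, l ≤ n → ∃ z ∈ Vy', f^[n] z ∈ Vy := by
  intro Vy hVy Vy' hVy'
  obtain ⟨W, hW, hconnect⟩ := exists_orbit_connecting_near_fixedPt f hf hfp hA
  obtain ⟨K, hK⟩ := eventually_atTop.1 ((hy.eventually hW).and (hy'.eventually hW))
  have hshift : ∀ (g : M → M) (x : M), Tendsto (fun n => g^[n] x) atTop (𝓝 p) →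
      Tendsto (fun n => g^[n] (g^[K] x)) atTop (𝓝 p) := fun g x hg =>
    (hg.comp (tendsto_add_atTop_nat K)).congr fun n => iterate_add_apply g n K x
  have hf_symm : ∀ x, f^[K] (f.symm^[K] x) = x := RightInverse.iterate f.apply_symm_apply K
  have hsymm_f : ∀ x, f.symm^[K] (f^[K] x) = x := LeftInverse.iterate f.symm_apply_apply K
  obtain ⟨l, hl⟩ := hconnect (f.symm^[K] y) (f^[K] y')
    (fun i => by rw [← iterate_add_apply]; exact (hK _ (by omega)).2)
    (fun j => by rw [← iterate_add_apply]; exact (hK _ (by omega)).1)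
    (hshift _ _ hy') (hshift _ _ hy)
    _ ((f.continuous.iterate K).continuousAt.preimage_mem_nhds (by rwa [hf_symm]))
    _ ((f.symm.continuous.iterate K).continuousAt.preimage_mem_nhds (by rwa [hsymm_f]))
  refine ⟨l + 2 * K, fun n hn => ?_⟩
  obtain ⟨z, hz, hzn⟩ := hl (n - 2 * K) (by omega)
  refine ⟨f.symm^[K] z, hz, ?_⟩
  rw [show n = K + (n - 2 * K) + K by omega, iterate_add_apply, iterate_add_apply, hf_symm]
  exact hzn

end Manifold

def C1Diffeo.toHomeomorph {d : ℕ} {M : Type*} [MetricSpace M] [ChartedSpace (Euc d) M]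
    (f : C1Diffeo d M) : M ≃ₜ M where
  toFun := f.toFun
  invFun := f.invFun
  left_inv := f.left_inv
  right_inv := f.right_inv
  continuous_toFun := f.contMDiff_toFun.continuous
  continuous_invFun := f.contMDiff_invFun.continuous

theorem statement10_general (d : ℕ) (M : Type*) [MetricSpace M]
    [ChartedSpace (Euc d) M]
    (f : C1Diffeo d M) (p : M) (hfix : f.toFun p = p)
    (Es Eu : Submodule ℝ (Euc d)) (C lam : ℝ) (hC : 0 < C) (hlam : lam ∈ Set.Ioo (0:ℝ) 1)
    (hinf : Es ⊓ Eu = ⊥) (hsup : Es ⊔ Eu = ⊤)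
    (hcon : ∀ n : ℕ, normOn d (Dop d (f.toFun^[n]) p) Es ≤ C * lam ^ n)
    (hexp : ∀ n : ℕ, normOn d (Dop d (f.invFun^[n]) p) Eu ≤ C * lam ^ n)
    (y y' : M)
    (hy : Filter.Tendsto (fun n : ℕ => dist (f.invFun^[n] y) p) Filter.atTop (nhds 0))
    (hy' : Filter.Tendsto (fun n : ℕ => dist (f.toFun^[n] y') p) Filter.atTop (nhds 0)) :
    ∀ Vy ∈ nhds y, ∀ Vy' ∈ nhds y', ∃ l : ℕ, ∀ n : ℕ, l ≤ n →
      ∃ z ∈ Vy', f.toFun^[n] z ∈ Vy := by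
  have hdiff := f.contMDiff_toFun.mdifferentiable one_ne_zero
  have hdiff_inv := f.contMDiff_invFun.mdifferentiable one_ne_zero
  have hfix_inv : f.invFun p = p := by simpa only [hfix] using f.left_inv p
  have hDop_iterate : ∀ {g : M → M}, MDifferentiable (𝓡 d) (𝓡 d) g → g p = p →
      ∀ n, Dop d g^[n] p = Dop d g p ^ n := fun hg hgp n =>
    ((hg p).hasMFDerivAt.iterate hgp n).mfderiv
  obtain ⟨C', hdich⟩ := exists_isExpDichotomy_of_isCompl
    (mfderiv_apply_mfderiv_of_rightInverse (hdiff p) (hdiff_inv p) f.right_inv hfix_inv)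
    ⟨disjoint_iff.2 hinf, codisjoint_iff.2 hsup⟩ hC hlam
    (fun n => hDop_iterate hdiff hfix n ▸ hcon n)
    (fun n => hDop_iterate hdiff_inv hfix_inv n ▸ hexp n)
  exact exists_iterate_mem_of_tendsto f.toHomeomorph (f.contMDiff_toFun p) hfix hdich
    (tendsto_iff_dist_tendsto_zero.2 hy) (tendsto_iff_dist_tendsto_zero.2 hy')

/-- consequence of the λ-lemma. Let `p` be a hyperbolic fixed point of
`f`, `y ∈ W^u(p)` and `y' ∈ W^s(p)`. Then for all neighborhoods `V_y` of `y` and `V_{y'}`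
of `y'`, there is `l` such that for every `n ≥ l` some point `z ∈ V_{y'}` satisfies
`f^n(z) ∈ V_y`. -/
theorem statement10 (d : ℕ) (M : Type*) [MetricSpace M] [CompactSpace M]
    [ChartedSpace (Euc d) M] [IsManifold (𝓡 d) ((⊤ : ℕ∞) : WithTop ℕ∞) M]
    (f : C1Diffeo d M) (p : M) (hfix : f.toFun p = p)
    (Es Eu : Submodule ℝ (Euc d)) (C lam : ℝ) (hC : 0 < C) (hlam : lam ∈ Set.Ioo (0:ℝ) 1)
    (hinf : Es ⊓ Eu = ⊥) (hsup : Es ⊔ Eu = ⊤)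
    (hinvs : Es.map (Dop d f.toFun p).toLinearMap = Es) (hinvu : Eu.map (Dop d f.toFun p).toLinearMap = Eu)
    (hcon : ∀ n : ℕ, normOn d (Dop d (f.toFun^[n]) p) Es ≤ C * lam ^ n)
    (hexp : ∀ n : ℕ, normOn d (Dop d (f.invFun^[n]) p) Eu ≤ C * lam ^ n)
    (y y' : M)
    (hy : Filter.Tendsto (fun n : ℕ => dist (f.invFun^[n] y) p) Filter.atTop (nhds 0))
    (hy' : Filter.Tendsto (fun n : ℕ => dist (f.toFun^[n] y') p) Filter.atTop (nhds 0)) :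
    ∀ Vy ∈ nhds y, ∀ Vy' ∈ nhds y', ∃ l : ℕ, ∀ n : ℕ, l ≤ n →
      ∃ z ∈ Vy', f.toFun^[n] z ∈ Vy :=
  statement10_general d M f p hfix Es Eu C lam hC hlam hinf hsup hcon hexp y y' hy hy'
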